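/- arXiv:2406.00953 — 9 statements merged into one kernel-verified Lean document; each statement's English description precedes it below -/
import Mathlib

section
/- Let n ≥ 1, let Γ ⊆ ℝⁿ be a convex cone containing the open positive octant Γₙ, and let f : ℝⁿ → ℝ be concave on Γ and positively homogeneous of degree one on Γ. Let λ ∈ Γ be a point at which f is differentiable with all partial derivatives ∂f/∂λⱼ(λ) > 0. Suppose there is γ > 0 such that f(μ) ≥ n·γ^{1/n}·(∏ⱼ μⱼ)^{1/n} for all μ ∈ Γₙ. Then ∏ⱼ₌₁ⁿ ∂f/∂λⱼ(λ) ≥ γ. -/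
/-!
By concavity and Euler's relation `df(λ) λ = f(λ)`, the differential `L = df(λ)` dominates `f`
on `Γ`. At the test point `μⱼ = 1 / ∂ⱼf(λ)` the linear form takes the value `L μ = n`, while
determinant domination gives `f(μ) ≥ n (γ / ∏ⱼ ∂ⱼf(λ))^{1/n}`; comparing the two yields
`γ ≤ ∏ⱼ ∂ⱼf(λ)`.
-/

open AffineMap in
theorem ConcaveOn.le_add_fderiv_sub {E : Type*} [NormedAddCommGroup E] [NormedSpace ℝ E]
    {s : Set E} {f : E → ℝ} (hf : ConcaveOn ℝ s f) {x y : E} (hx : x ∈ s) (hy : y ∈ s)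
    (hfx : DifferentiableAt ℝ f x) : f y ≤ f x + fderiv ℝ f x (y - x) := by
  let g : ℝ →ᵃ[ℝ] E := lineMap x y
  have hg : HasDerivAt (f ∘ g) (fderiv ℝ f x (y - x)) 0 := by
    have hfg : HasFDerivAt f (fderiv ℝ f x) (g 0) := by simpa [g] using hfx.hasFDerivAt
    exact hfg.comp_hasDerivAt 0 hasDerivAt_lineMap
  have := (hf.comp_affineMap g).slope_le_of_hasDerivAt (by simpa [g] using hx)
    (by simpa [g] using hy) zero_lt_one hg
  simp only [g, slope_def_field, Function.comp_apply, lineMap_apply_zero, lineMap_apply_one,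
    sub_zero, div_one, map_sub] at this ⊢
  linarith

theorem fderiv_apply_self_of_homogeneous {E F : Type*} [NormedAddCommGroup E] [NormedSpace ℝ E]
    [NormedAddCommGroup F] [NormedSpace ℝ F] {f : E → F} {x : E}
    (hhom : ∀ t : ℝ, 0 < t → f (t • x) = t • f x) (hfx : DifferentiableAt ℝ f x) :
    fderiv ℝ f x x = f x := by
  have hchain : HasDerivAt (fun t : ℝ => f (t • x)) (fderiv ℝ f x x) 1 := by
    have hf1 : HasFDerivAt f (fderiv ℝ f x) ((1 : ℝ) • x) := by simpa using hfx.hasFDerivAt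
    have hscale : HasDerivAt (fun t : ℝ => t • x) x 1 := by
      simpa using (hasDerivAt_id (1 : ℝ)).smul_const x
    exact hf1.comp_hasDerivAt 1 hscale
  have hray : HasDerivAt (fun t : ℝ => f (t • x)) (f x) 1 := by
    refine (by simpa using (hasDerivAt_id (1 : ℝ)).smul_const (f x) :
      HasDerivAt (fun t : ℝ => t • f x) (f x) 1).congr_of_eventuallyEq ?_
    filter_upwards [eventually_gt_nhds zero_lt_one] with t ht
    exact hhom t ht
  exact hchain.unique hray

theorem map_eq_sum_smul_single {ι R M F : Type*} [Fintype ι] [DecidableEq ι] [Semiring R]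
    [AddCommMonoid M] [Module R M] [FunLike F (ι → R) M] [LinearMapClass F R (ι → R) M]
    (L : F) (x : ι → R) : L x = ∑ j, x j • L (Pi.single j 1) := by
  conv_lhs => rw [← Finset.univ_sum_single x]
  rw [map_sum]
  refine Finset.sum_congr rfl fun j _ => ?_
  rw [← map_smul, ← Pi.single_smul', smul_eq_mul, mul_one]

theorem le_of_mul_rpow_inv_le {n : ℕ} (hn : 0 < n) {γ P : ℝ} (hγ : 0 < γ) (hP : 0 < P)
    (h : n * γ ^ ((1 : ℝ) / n) * P⁻¹ ^ ((1 : ℝ) / n) ≤ n) : γ ≤ P := by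
  have hn' : (0 : ℝ) < n := by exact_mod_cast hn
  have hroot : (γ / P) ^ ((1 : ℝ) / n) ≤ 1 ^ ((1 : ℝ) / n) := by
    rw [div_eq_mul_inv, Real.mul_rpow hγ.le (inv_nonneg.mpr hP.le), Real.one_rpow]
    nlinarith
  rw [Real.rpow_le_rpow_iff (div_nonneg hγ.le hP.le) zero_le_one (by positivity)] at hroot
  rwa [div_le_one hP] at hroot

theorem ConcaveOn.le_fderiv_apply_of_homogeneous {E : Type*} [NormedAddCommGroup E]
    [NormedSpace ℝ E] {s : Set E} {f : E → ℝ} (hf : ConcaveOn ℝ s f) {x y : E}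
    (hhom : ∀ t : ℝ, 0 < t → f (t • x) = t * f x) (hx : x ∈ s) (hy : y ∈ s)
    (hfx : DifferentiableAt ℝ f x) : f y ≤ fderiv ℝ f x y := by
  have := hf.le_add_fderiv_sub hx hy hfx
  rwa [map_sub, fderiv_apply_self_of_homogeneous hhom hfx, add_sub_cancel] at this

theorem product_of_partials_ge_of_determinant_domination_general
    {n : ℕ} (hn : 1 ≤ n) (Γ : Set (Fin n → ℝ)) (f : (Fin n → ℝ) → ℝ)
    (hoctant : ∀ μ : Fin n → ℝ, (∀ j, 0 < μ j) → μ ∈ Γ)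
    (hconcave : ConcaveOn ℝ Γ f)
    (hhom : ∀ t : ℝ, 0 < t → ∀ x ∈ Γ, f (t • x) = t * f x)
    (lam : Fin n → ℝ) (hlam : lam ∈ Γ)
    (hdiff : DifferentiableAt ℝ f lam)
    (hpos : ∀ j, 0 < fderiv ℝ f lam (Pi.single j 1))
    (γ : ℝ) (hγ : 0 < γ)
    (hdom : ∀ μ : Fin n → ℝ, (∀ j, 0 < μ j) →
      (n : ℝ) * γ ^ ((1 : ℝ) / n) * (∏ j, μ j) ^ ((1 : ℝ) / n) ≤ f μ) :
    γ ≤ ∏ j, fderiv ℝ f lam (Pi.single j 1) := by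
  set μ : Fin n → ℝ := fun j => (fderiv ℝ f lam (Pi.single j 1))⁻¹
  have hμ : ∀ j, 0 < μ j := fun j => inv_pos.mpr (hpos j)
  have hfderiv_μ : fderiv ℝ f lam μ = n := by
    simp [map_eq_sum_smul_single (fderiv ℝ f lam) μ, μ, inv_mul_cancel₀ (hpos _).ne']
  refine le_of_mul_rpow_inv_le hn hγ (Finset.prod_pos fun j _ => hpos j) ?_
  calc (n : ℝ) * γ ^ ((1 : ℝ) / n) * (∏ j, fderiv ℝ f lam (Pi.single j 1))⁻¹ ^ ((1 : ℝ) / n)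
      = n * γ ^ ((1 : ℝ) / n) * (∏ j, μ j) ^ ((1 : ℝ) / n) := by
        rw [Finset.prod_inv_distrib]
    _ ≤ f μ := hdom μ hμ
    _ ≤ fderiv ℝ f lam μ :=
        hconcave.le_fderiv_apply_of_homogeneous (hhom · · lam hlam) hlam (hoctant μ hμ) hdiff
    _ = n := hfderiv_μ

/-- Lemma of Guo–Phong–Tong: determinant domination implies the structural
lower bound on the product of partial derivatives. -/
theorem product_of_partials_ge_of_determinant_domination
    {n : ℕ} (hn : 1 ≤ n) (Γ : Set (Fin n → ℝ)) (f : (Fin n → ℝ) → ℝ)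
    (hcone : ∀ t : ℝ, 0 < t → ∀ x ∈ Γ, t • x ∈ Γ)
    (hconvex : Convex ℝ Γ)
    (hoctant : ∀ μ : Fin n → ℝ, (∀ j, 0 < μ j) → μ ∈ Γ)
    (hconcave : ConcaveOn ℝ Γ f)
    (hhom : ∀ t : ℝ, 0 < t → ∀ x ∈ Γ, f (t • x) = t * f x)
    (lam : Fin n → ℝ) (hlam : lam ∈ Γ)
    (hdiff : DifferentiableAt ℝ f lam)
    (hpos : ∀ j, 0 < fderiv ℝ f lam (Pi.single j 1))
    (γ : ℝ) (hγ : 0 < γ)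
    (hdom : ∀ μ : Fin n → ℝ, (∀ j, 0 < μ j) →
      (n : ℝ) * γ ^ ((1 : ℝ) / n) * (∏ j, μ j) ^ ((1 : ℝ) / n) ≤ f μ) :
    γ ≤ ∏ j, fderiv ℝ f lam (Pi.single j 1) :=
  product_of_partials_ge_of_determinant_domination_general hn Γ f hoctant hconcave hhom lam hlam
    hdiff hpos γ hγ hdom
end

section
/- Let p be a polynomial in n real variables that is homogeneous of degree N ≥ 1, all of whose coefficients are nonnegative. Let e = (1, …, 1) ∈ ℝⁿ. Assume p(e) > 0 and that there exists k > 0 with ∂p/∂x₁(e) = ∂p/∂x₂(e) = ⋯ = ∂p/∂xₙ(e) = k. Then there exists a constant c > 0 such that p(x)^{1/N} ≥ c·(x₁·x₂⋯xₙ)^{1/n} for every x ∈ ℝⁿ with xⱼ > 0 for all j. -/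
/-!
Weighted AM–GM over the monomials of `p`, with the weights `p.coeff m / p(e)`, gives
`p(x) ≥ p(e) · ∏ⱼ xⱼ ^ (∂ⱼp(e) / p(e))`. Euler's identity `∑ⱼ ∂ⱼp(e) = N · p(e)` together with
`∂ⱼp(e) = k` for all `j` turns every exponent into `N / n`; taking `N`-th roots gives
`c = p(e) ^ (1 / N)`.
-/

namespace MvPolynomial

variable {σ R : Type*}

theorem eval_one_eq_sum_coeff [CommSemiring R] (p : MvPolynomial σ R) :
    eval 1 p = ∑ m ∈ p.support, p.coeff m := by
  simp [eval_eq]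

theorem eval_one_pderiv [CommSemiring R] (p : MvPolynomial σ R) (j : σ) :
    eval 1 (pderiv j p) = ∑ m ∈ p.support, p.coeff m * m j := by
  conv_lhs => rw [p.as_sum]
  simp only [map_sum, pderiv_monomial, eval_monomial]
  refine Finset.sum_congr rfl fun m _ => ?_
  simp [Finsupp.prod]

theorem IsHomogeneous.sum_eval_one_pderiv [CommSemiring R] [Fintype σ] {p : MvPolynomial σ R}
    {N : ℕ} (hp : p.IsHomogeneous N) : ∑ j, eval 1 (pderiv j p) = N * eval 1 p := by
  simpa using congrArg (eval 1) hp.sum_X_mul_pderiv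

theorem eval_one_mul_prod_rpow_le_eval [Fintype σ] {p : MvPolynomial σ ℝ}
    (hcoeff : ∀ m, 0 ≤ p.coeff m) (hpe : 0 < eval 1 p) {x : σ → ℝ} (hx : ∀ j, 0 < x j) :
    eval 1 p * ∏ j, x j ^ (eval 1 (pderiv j p) / eval 1 p) ≤ eval x p := by
  set S := eval 1 p
  have amgm := Real.geom_mean_le_arith_mean_weighted p.support
    (fun m => p.coeff m / S) (fun m => ∏ j, x j ^ m j)
    (fun m _ => div_nonneg (hcoeff m) hpe.le)
    (by rw [← Finset.sum_div, ← eval_one_eq_sum_coeff, div_self hpe.ne'])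
    (fun m _ => Finset.prod_nonneg fun j _ => pow_nonneg (hx j).le _)
  have hmean : ∑ m ∈ p.support, p.coeff m / S * ∏ j, x j ^ m j = eval x p / S := by
    rw [eval_eq', Finset.sum_div]
    exact Finset.sum_congr rfl fun m _ => by ring
  have hgeom : ∏ m ∈ p.support, (∏ j, x j ^ m j) ^ (p.coeff m / S) =
      ∏ j, x j ^ (eval 1 (pderiv j p) / S) := by
    have hmonomial (m : σ →₀ ℕ) (t : ℝ) :
        (∏ j, x j ^ m j) ^ t = ∏ j, x j ^ ((m j : ℝ) * t) := by
      rw [← Real.finsetProd_rpow _ _ fun j _ => pow_nonneg (hx j).le _]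
      refine Finset.prod_congr rfl fun j _ => ?_
      rw [← Real.rpow_natCast, ← Real.rpow_mul (hx j).le]
    simp only [hmonomial, Finset.prod_comm (s := p.support),
      ← Real.rpow_sum_of_pos (hx _), eval_one_pderiv, Finset.sum_div]
    refine Finset.prod_congr rfl fun j _ => congrArg _ (Finset.sum_congr rfl fun m _ => ?_)
    ring
  rw [hgeom, hmean, le_div_iff₀ hpe] at amgm
  linarith

end MvPolynomial

open MvPolynomial

theorem gurvits_determinant_domination_general
    {n N : ℕ} (hN : 1 ≤ N) (p : MvPolynomial (Fin n) ℝ)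
    (hhom : p.IsHomogeneous N)
    (hcoeff : ∀ m, 0 ≤ p.coeff m)
    (hpe : 0 < eval (fun _ => (1 : ℝ)) p)
    (k : ℝ)
    (hderiv : ∀ j, eval (fun _ => (1 : ℝ)) (pderiv j p) = k) :
    ∃ c > (0 : ℝ), ∀ x : Fin n → ℝ, (∀ j, 0 < x j) →
      c * (∏ j, x j) ^ ((1 : ℝ) / n) ≤ (eval x p) ^ ((1 : ℝ) / N) := by
  simp only [← Pi.one_def] at hpe hderiv
  set S := eval 1 p
  have hNpos : (0 : ℝ) < N := by exact_mod_cast hN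
  have hEuler : (n : ℝ) * k = N * S := by
    simpa [hderiv] using hhom.sum_eval_one_pderiv
  have hnpos : (0 : ℝ) < n := by
    refine (Nat.cast_nonneg n).lt_of_ne fun hn => ?_
    rw [← hn, zero_mul] at hEuler
    nlinarith
  have hexp (j : Fin n) : eval 1 (pderiv j p) / S = N / n := by
    rw [hderiv j, div_eq_div_iff hpe.ne' hnpos.ne']
    linarith
  refine ⟨S ^ ((1 : ℝ) / N), Real.rpow_pos_of_pos hpe _, fun x hx => ?_⟩
  have key : S * ∏ j, x j ^ (eval 1 (pderiv j p) / S) ≤ eval x p :=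
    eval_one_mul_prod_rpow_le_eval hcoeff hpe hx
  simp only [hexp] at key
  have hprod : 0 ≤ ∏ j, x j := Finset.prod_nonneg fun j _ => (hx j).le
  calc S ^ ((1 : ℝ) / N) * (∏ j, x j) ^ ((1 : ℝ) / n)
      = (S * ∏ j, x j ^ ((N : ℝ) / n)) ^ ((1 : ℝ) / N) := by
        rw [Real.finsetProd_rpow _ _ fun j _ => (hx j).le, Real.mul_rpow hpe.le
          (by positivity), ← Real.rpow_mul hprod]
        field_simp
    _ ≤ (eval x p) ^ ((1 : ℝ) / N) := by
        gcongr
        exact mul_nonneg hpe.le (Finset.prod_nonneg fun j _ => Real.rpow_nonneg (hx j).le _)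

/-- Gurvits' theorem: a homogeneous polynomial with nonnegative coefficients,
positive at `e = (1,…,1)` and with all partial derivatives at `e` equal,
dominates a multiple of the geometric mean on the positive octant. -/
theorem gurvits_determinant_domination
    {n N : ℕ} (hN : 1 ≤ N) (p : MvPolynomial (Fin n) ℝ)
    (hhom : p.IsHomogeneous N)
    (hcoeff : ∀ m, 0 ≤ p.coeff m)
    (hpe : 0 < eval (fun _ => (1 : ℝ)) p)
    (k : ℝ) (hk : 0 < k)
    (hderiv : ∀ j, eval (fun _ => (1 : ℝ)) (pderiv j p) = k) :
    ∃ c > (0 : ℝ), ∀ x : Fin n → ℝ, (∀ j, 0 < x j) →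
      c * (∏ j, x j) ^ ((1 : ℝ) / n) ≤ (eval x p) ^ ((1 : ℝ) / N) :=
  gurvits_determinant_domination_general hN p hhom hcoeff hpe k hderiv
end

section
/- Let Γ ⊆ ℝⁿ be a closed convex cone containing the open positive octant Γₙ, and let f : Γ → ℝ be concave on Γ, positively homogeneous of degree one on Γ, and satisfy the determinant domination condition: there is c₀ > 0 with f(μ) ≥ c₀·(∏ⱼ μⱼ)^{1/n} for all μ ∈ Γₙ. Then for every v in the interior of Γ and every constant C₀ > 0, the set {λ ∈ Γ : f(λ) ≤ C₀ and λ − v lies in the closed positive octant} is bounded. -/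
/-- Boundedness of the set of admissible `λ ∈ Γ` with `f λ ≤ C₀` lying above a
fixed interior point `v` of the cone, for `f` satisfying determinant domination. -/
theorem bounded_sublevel_above_interior_point
    {n : ℕ} (Γ : Set (Fin n → ℝ)) (f : (Fin n → ℝ) → ℝ)
    (hclosed : IsClosed Γ)
    (hconvex : Convex ℝ Γ)
    (hcone : ∀ t : ℝ, 0 < t → ∀ x ∈ Γ, t • x ∈ Γ)
    (hoctant : ∀ μ : Fin n → ℝ, (∀ j, 0 < μ j) → μ ∈ Γ)
    (hconcave : ConcaveOn ℝ Γ f)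
    (hhom : ∀ t : ℝ, 0 < t → ∀ x ∈ Γ, f (t • x) = t * f x)
    (c₀ : ℝ) (hc₀ : 0 < c₀)
    (hdom : ∀ μ : Fin n → ℝ, (∀ j, 0 < μ j) →
      c₀ * (∏ j, μ j) ^ ((1 : ℝ) / n) ≤ f μ)
    (v : Fin n → ℝ) (hv : v ∈ interior Γ)
    (C₀ : ℝ) (hC₀ : 0 < C₀) :
    Bornology.IsBounded
      {lam : Fin n → ℝ | lam ∈ Γ ∧ f lam ≤ C₀ ∧ ∀ j, 0 ≤ lam j - v j} := by
  rcases Nat.eq_zero_or_pos n with hn | hn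
  · subst hn
    rw [isBounded_iff_forall_norm_le]
    exact ⟨0, fun x _ => by rw [Subsingleton.elim x 0]; simp⟩
  -- superadditivity
  have hsuper : ∀ x ∈ Γ, ∀ y ∈ Γ, f x + f y ≤ f (x + y) := by
    intro x hx y hy
    have hmid : (1/2 : ℝ) • x + (1/2 : ℝ) • y ∈ Γ :=
      hconvex hx hy (by norm_num) (by norm_num) (by norm_num)
    have h2 : f ((2:ℝ) • ((1/2:ℝ) • x + (1/2:ℝ) • y))
        = 2 * f ((1/2:ℝ) • x + (1/2:ℝ) • y) := hhom 2 (by norm_num) _ hmid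
    have hcc := hconcave.2 hx hy (by norm_num : (0:ℝ) ≤ 1/2) (by norm_num : (0:ℝ) ≤ 1/2)
      (by norm_num)
    have heq : (2:ℝ) • ((1/2:ℝ) • x + (1/2:ℝ) • y) = x + y := by
      rw [smul_add, smul_smul, smul_smul]; norm_num
    rw [heq] at h2
    have := hcc
    simp only [smul_eq_mul] at this
    calc f x + f y = 2 * (1/2 * f x + 1/2 * f y) := by ring
    _ ≤ 2 * f ((1/2:ℝ) • x + (1/2:ℝ) • y) := by linarith
    _ = f (x + y) := h2.symm
  -- interior ball
  obtain ⟨r, hr, hball⟩ := Metric.mem_nhds_iff.mp (mem_interior_iff_mem_nhds.mp hv)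
  set δ : ℝ := r / 2 with hδdef
  have hδ : 0 < δ := by positivity
  set p : Fin n → ℝ := v - δ • (fun _ : Fin n => (1:ℝ)) with hpdef
  have hpΓ : p ∈ Γ := by
    apply hball
    rw [Metric.mem_ball, dist_eq_norm]
    have : p - v = -(δ • (fun _ => (1:ℝ))) := by rw [hpdef]; abel
    rw [this, norm_neg, norm_smul]
    have h1 : ‖(fun _ : Fin n => (1:ℝ))‖ = 1 := by
      have : Nonempty (Fin n) := ⟨⟨0, hn⟩⟩
      simp
    rw [h1, mul_one, Real.norm_eq_abs, abs_of_pos hδ]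
    rw [hδdef]; linarith
  set K : ℝ := f p with hK
  set B : ℝ := ((C₀ - K)/c₀)^n / δ^(n-1) with hB
  rw [isBounded_iff_forall_norm_le]
  refine ⟨‖v‖ + |B|, fun lam hlam => ?_⟩
  obtain ⟨hlamΓ, hflam, hlamv⟩ := hlam
  set μ : Fin n → ℝ := fun j => lam j - v j + δ with hμ
  have hμpos : ∀ j, 0 < μ j := fun j => by
    have := hlamv j; simp only [hμ]; linarith
  have hμΓ : μ ∈ Γ := hoctant μ hμpos
  have hsum : p + μ = lam := by
    funext j
    simp only [hpdef, hμ, Pi.add_apply, Pi.sub_apply, Pi.smul_apply, smul_eq_mul]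
    ring
  have hfineq : K + f μ ≤ C₀ := by
    have := hsuper p hpΓ μ hμΓ
    rw [hsum] at this
    linarith
  have hdomμ := hdom μ hμpos
  have hmain : c₀ * (∏ j, μ j) ^ ((1:ℝ)/n) ≤ C₀ - K := by linarith
  -- per-coordinate bound
  have hcoord : ∀ j, μ j ≤ B := by
    intro j
    have hprodge : μ j * δ^(n-1) ≤ ∏ i, μ i := by
      rw [← Finset.mul_prod_erase Finset.univ μ (Finset.mem_univ j)]
      have hcard : (Finset.univ.erase j).card = n - 1 := by
        simp [Finset.card_erase_of_mem]
      have : δ^(n-1) ≤ ∏ i ∈ Finset.univ.erase j, μ i := by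
        rw [← hcard, ← Finset.prod_const]
        exact Finset.prod_le_prod (fun i _ => le_of_lt hδ)
          (fun i _ => by have := hlamv i; simp only [hμ]; linarith)
      have hμjpos := hμpos j
      nlinarith [this, hμjpos]
    have hx0 : (0:ℝ) ≤ μ j * δ^(n-1) := le_of_lt (mul_pos (hμpos j) (pow_pos hδ _))
    have hrpow : (μ j * δ^(n-1)) ^ ((1:ℝ)/n) ≤ (∏ i, μ i) ^ ((1:ℝ)/n) :=
      Real.rpow_le_rpow hx0 hprodge (by positivity)
    have h1 : (μ j * δ^(n-1)) ^ ((1:ℝ)/n) ≤ (C₀ - K)/c₀ := by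
      rw [le_div_iff₀ hc₀, mul_comm]
      calc c₀ * (μ j * δ^(n-1)) ^ ((1:ℝ)/n)
          ≤ c₀ * (∏ i, μ i) ^ ((1:ℝ)/n) := by
            exact mul_le_mul_of_nonneg_left hrpow (le_of_lt hc₀)
      _ ≤ C₀ - K := hmain
    have hpowle : ((μ j * δ^(n-1)) ^ ((1:ℝ)/n))^n ≤ ((C₀ - K)/c₀)^n :=
      pow_le_pow_left₀ (Real.rpow_nonneg hx0 _) h1 n
    have hid : ((μ j * δ^(n-1)) ^ ((1:ℝ)/n))^n = μ j * δ^(n-1) := by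
      rw [one_div]
      exact Real.rpow_inv_natCast_pow hx0 hn.ne'
    rw [hid] at hpowle
    rw [hB, le_div_iff₀ (pow_pos hδ (n-1))]
    exact hpowle
  -- norm bound
  have hBpos : 0 < B := lt_of_lt_of_le (hμpos ⟨0, hn⟩) (hcoord ⟨0, hn⟩)
  rw [pi_norm_le_iff_of_nonneg (by positivity)]
  intro j
  rw [Real.norm_eq_abs, abs_le]
  have hvj : |v j| ≤ ‖v‖ := by
    have := norm_le_pi_norm v j
    rwa [Real.norm_eq_abs] at this
  have hup : lam j ≤ v j + B := by
    have := hcoord j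
    simp only [hμ] at this
    linarith
  have hlo : v j ≤ lam j := by have := hlamv j; linarith
  constructor
  · have : -(|v j|) ≤ v j := neg_abs_le _
    have hB' : 0 ≤ |B| := abs_nonneg _
    nlinarith [abs_nonneg B, hvj]
  · have : B ≤ |B| := le_abs_self _
    linarith [le_abs_self (v j)]
end

section
/- Let φ : [0, ∞) → [0, ∞) be a nonincreasing function, and suppose there exist μ > 0, B₀ > 0 and s₀ ≥ 0 such that for every r > 0 and every s ≥ s₀ one has r·φ(s + r) ≤ B₀·φ(s)^{1+μ}. Then φ(s) = 0 for every s ≥ s₀ + 2·B₀·φ(s₀)^{μ}/(1 − 2^{−μ}). -/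
/-! Starting from `M = φ s₀`, each step halves the current bound: if `φ s ≤ a`, the hypothesis with
`r = 2 B₀ a ^ μ` gives `φ (s + r) ≤ a / 2`. Iterating from `s₀` with `a = M / 2 ^ j`, the step lengths
`2 B₀ M ^ μ (2 ^ (-μ)) ^ j` form a geometric series, so all the points reached stay below
`s₀ + 2 B₀ M ^ μ / (1 - 2 ^ (-μ))`; beyond that point `φ ≤ M / 2 ^ k` for every `k`. -/

open Real Finset Filter Topology

namespace DeGiorgi

variable {φ : ℝ → ℝ} {μ B₀ s₀ : ℝ}

theorem apply_add_le_half (hμ : 0 < μ) (hB₀ : 0 < B₀)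
    (h : ∀ r > (0 : ℝ), ∀ s ≥ s₀, r * φ (s + r) ≤ B₀ * φ s ^ (1 + μ))
    {s a : ℝ} (hs : s₀ ≤ s) (hφ₀ : 0 ≤ φ s) (hφa : φ s ≤ a) :
    φ (s + 2 * B₀ * a ^ μ) ≤ a / 2 := by
  obtain ha | ha := (hφ₀.trans hφa).eq_or_lt
  · simpa [← ha, zero_rpow hμ.ne'] using hφa
  have haμ : 0 < a ^ μ := rpow_pos_of_pos ha μ
  have hpow : φ s ^ (1 + μ) ≤ a * a ^ μ := by
    rw [← rpow_one_add' ha.le (by positivity), add_comm]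
    exact rpow_le_rpow hφ₀ hφa (by positivity)
  have hstep : 2 * B₀ * a ^ μ * φ (s + 2 * B₀ * a ^ μ) ≤ 2 * B₀ * a ^ μ * (a / 2) :=
    calc _ ≤ B₀ * φ s ^ (1 + μ) := h _ (by positivity) s hs
      _ ≤ B₀ * (a * a ^ μ) := by gcongr
      _ = _ := by ring
  exact le_of_mul_le_mul_left hstep (by positivity)

noncomputable def level (μ B₀ s₀ M : ℝ) (k : ℕ) : ℝ :=
  s₀ + ∑ j ∈ range k, 2 * B₀ * (M / 2 ^ j) ^ μ

theorem level_succ (M : ℝ) (k : ℕ) :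
    level μ B₀ s₀ M (k + 1) = level μ B₀ s₀ M k + 2 * B₀ * (M / 2 ^ k) ^ μ := by
  rw [level, level, sum_range_succ, add_assoc]

theorem le_level (hB₀ : 0 ≤ B₀) {M : ℝ} (hM : 0 ≤ M) (k : ℕ) : s₀ ≤ level μ B₀ s₀ M k :=
  le_add_of_nonneg_right <| sum_nonneg fun _ _ => by positivity

theorem div_two_pow_rpow {M : ℝ} (hM : 0 ≤ M) (μ : ℝ) (j : ℕ) :
    (M / 2 ^ j) ^ μ = M ^ μ * ((2 : ℝ) ^ (-μ)) ^ j := by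
  rw [div_rpow hM (by positivity), ← rpow_pow_comm zero_le_two, rpow_neg zero_le_two, inv_pow,
    div_eq_mul_inv]

theorem level_le (hμ : 0 < μ) (hB₀ : 0 ≤ B₀) {M : ℝ} (hM : 0 ≤ M) (k : ℕ) :
    level μ B₀ s₀ M k ≤ s₀ + 2 * B₀ * M ^ μ / (1 - 2 ^ (-μ)) := by
  have hq₀ : 0 < (2 : ℝ) ^ (-μ) := rpow_pos_of_pos two_pos _
  have hq₁ : (2 : ℝ) ^ (-μ) < 1 := rpow_lt_one_of_one_lt_of_neg one_lt_two (neg_lt_zero.mpr hμ)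
  have hgeom := geom_sum_Ico_le_of_lt_one (m := 0) (n := k) hq₀.le hq₁
  rw [pow_zero, ← range_eq_Ico] at hgeom
  simp_rw [level, div_two_pow_rpow hM, ← mul_assoc, ← mul_sum, ← mul_one_div (2 * B₀ * M ^ μ)]
  gcongr

theorem apply_level_le (hμ : 0 < μ) (hB₀ : 0 < B₀) (hnonneg : ∀ s ≥ s₀, 0 ≤ φ s)
    (h : ∀ r > (0 : ℝ), ∀ s ≥ s₀, r * φ (s + r) ≤ B₀ * φ s ^ (1 + μ))
    {M : ℝ} (hM : φ s₀ ≤ M) (k : ℕ) : φ (level μ B₀ s₀ M k) ≤ M / 2 ^ k := by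
  have hM₀ : 0 ≤ M := (hnonneg s₀ le_rfl).trans hM
  induction k with
  | zero => simpa [level] using hM
  | succ k ih =>
    have hs : s₀ ≤ level μ B₀ s₀ M k := le_level hB₀.le hM₀ k
    rw [level_succ, pow_succ, ← div_div]
    exact apply_add_le_half hμ hB₀ h hs (hnonneg _ hs) ih

end DeGiorgi

open DeGiorgi in
/-- De Giorgi's iteration lemma. -/
theorem de_giorgi_iteration
    (φ : ℝ → ℝ)
    (hnonneg : ∀ s, 0 ≤ s → 0 ≤ φ s)
    (hmono : ∀ s t, 0 ≤ s → s ≤ t → φ t ≤ φ s)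
    (μ B₀ s₀ : ℝ) (hμ : 0 < μ) (hB₀ : 0 < B₀) (hs₀ : 0 ≤ s₀)
    (h : ∀ r > (0 : ℝ), ∀ s ≥ s₀, r * φ (s + r) ≤ B₀ * φ s ^ (1 + μ)) :
    ∀ s ≥ s₀ + 2 * B₀ * φ s₀ ^ μ / (1 - 2 ^ (-μ)), φ s = 0 := by
  intro s hs
  have hM₀ := hnonneg s₀ hs₀
  have hlevel (k : ℕ) : 0 ≤ level μ B₀ s₀ (φ s₀) k ∧ level μ B₀ s₀ (φ s₀) k ≤ s :=
    ⟨hs₀.trans (le_level hB₀.le hM₀ k), (level_le hμ hB₀.le hM₀ k).trans hs⟩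
  have hdecay (k : ℕ) : φ s ≤ φ s₀ / 2 ^ k :=
    (hmono _ s (hlevel k).1 (hlevel k).2).trans
      (apply_level_le hμ hB₀ (fun t ht => hnonneg t (hs₀.trans ht)) h le_rfl k)
  have hlim : Tendsto (fun k : ℕ => φ s₀ / 2 ^ k) atTop (𝓝 0) :=
    tendsto_const_nhds.div_atTop (tendsto_pow_atTop_atTop_of_one_lt one_lt_two)
  exact (ge_of_tendsto' hlim hdecay).antisymm (hnonneg s ((hlevel 0).1.trans (hlevel 0).2))
end

section
/- Let A and B be n × n positive definite Hermitian complex matrices. Then (1/n)·Re(trace(A·B)) ≥ (Re(det A) · Re(det B))^{1/n}. (Since A and B are Hermitian, trace(conj(A)ᵀ·B) = trace(A·B); the trace of A·B and the determinants of A and B are real and positive.) -/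
/-!
Writing `A = Cᴴ C`, the matrix `C B Cᴴ` is positive semidefinite, has the same trace as `A B`
and has determinant `det A · det B`; the inequality is then AM–GM for its eigenvalues.
-/

open Matrix
open scoped ComplexOrder

namespace Matrix

variable {ι 𝕜 : Type*} [Fintype ι] [DecidableEq ι] [RCLike 𝕜]

theorem PosSemidef.re_det_rpow_le_re_trace_div_card [Nonempty ι] {M : Matrix ι ι 𝕜}
    (hM : M.PosSemidef) :
    RCLike.re M.det ^ ((1 : ℝ) / Fintype.card ι) ≤ RCLike.re M.trace / Fintype.card ι := by
  have amgm := Real.geom_mean_le_arith_mean Finset.univ (fun _ ↦ 1) hM.1.eigenvalues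
    (fun _ _ ↦ zero_le_one) (by simp [Fintype.card_pos]) (fun i _ ↦ hM.eigenvalues_nonneg i)
  simp only [Real.rpow_one, one_mul, Finset.sum_const, Finset.card_univ, nsmul_eq_mul,
    mul_one] at amgm
  rw [hM.1.det_eq_prod_eigenvalues, hM.1.trace_eq_sum_eigenvalues, ← RCLike.ofReal_prod,
    ← RCLike.ofReal_sum, RCLike.ofReal_re, RCLike.ofReal_re, one_div]
  exact amgm

open scoped MatrixOrder in
theorem PosSemidef.re_det_mul_re_det_rpow_le_re_trace_mul_div_card [Nonempty ι]
    {A B : Matrix ι ι 𝕜} (hA : A.PosSemidef) (hB : B.PosSemidef) :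
    (RCLike.re A.det * RCLike.re B.det) ^ ((1 : ℝ) / Fintype.card ι) ≤
      RCLike.re (A * B).trace / Fintype.card ι := by
  obtain ⟨C, rfl⟩ := CStarAlgebra.nonneg_iff_eq_star_mul_self.mp hA.nonneg
  rw [star_eq_conjTranspose] at hA ⊢
  have hdet : (C * B * Cᴴ).det = (Cᴴ * C).det * B.det := by
    simp only [det_mul]; ring
  have hre : RCLike.re ((Cᴴ * C).det * B.det) = RCLike.re (Cᴴ * C).det * RCLike.re B.det := by
    rw [RCLike.mul_re, (RCLike.nonneg_iff.mp hA.det_nonneg).2, zero_mul, sub_zero]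
  rw [← hre, ← hdet, ← trace_mul_cycle]
  exact (hB.mul_mul_conjTranspose_same C).re_det_rpow_le_re_trace_div_card

end Matrix

/-- For positive definite Hermitian matrices `A`, `B`,
`(1/n)·Re(tr(A·B)) ≥ (Re(det A)·Re(det B))^{1/n}`. -/
theorem trace_mul_ge_det_rpow
    {n : ℕ} (hn : 0 < n) (A B : Matrix (Fin n) (Fin n) ℂ)
    (hA : A.PosDef) (hB : B.PosDef) :
    ((A.det).re * (B.det).re) ^ ((1 : ℝ) / n) ≤ (1 / n : ℝ) * ((A * B).trace).re := by
  have : NeZero n := ⟨hn.ne'⟩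
  simpa [div_eq_inv_mul] using
    hA.posSemidef.re_det_mul_re_det_rpow_le_re_trace_mul_div_card hB.posSemidef
end

section
/- Let Γ ⊆ ℝⁿ be a closed convex cone that is invariant under permutations of the coordinates, and let f : ℝⁿ → ℝ be invariant under permutations of the coordinates, concave on Γ, and nonnegative on Γ. Let A and B be n × n Hermitian complex matrices such that, for every t ≥ 0, the vector of eigenvalues of A + tB lies in Γ. If the function g(t) := f(vector of eigenvalues of A + tB) has a derivative d at t = 0 (derivative from within [0, ∞)), then d ≥ 0. -/
open Matrix
open scoped InnerProductSpace

/-!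
Along the line, `g t = f (λ (A + t • B))` is concave on `[0, ∞)`. Indeed, if `P = a • M + b • N`,
the eigenvalues of `P` are the diagonal entries of `P` in an eigenbasis `v` of `P`, hence
`a • x + b • y` with `x`, `y` the diagonals of `M`, `N` in the basis `v`. By Schur, such a diagonal
is the image of the eigenvalues under the doubly stochastic matrix `(‖⟪u j, v i⟫‖²)`, so by
Birkhoff it is a convex combination of permutations of the eigenvalues; symmetry and concavity of
`f` give `a f(λ M) + b f(λ N) ≤ a f x + b f y ≤ f(λ P)`. Finally a concave function on `[0, ∞)`
that is bounded below cannot have a negative right derivative at `0`: its slope over `[0, T]`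
lies below the derivative and above `(inf g - g 0) / T → 0`.
-/

variable {ι : Type*}

lemma ConcaveOn.le_apply_of_mem_convexHull_perm {Γ : Set (ι → ℝ)} {f : (ι → ℝ) → ℝ}
    (hf : ConcaveOn ℝ Γ f) (hΓperm : ∀ (σ : Equiv.Perm ι) (x : ι → ℝ), x ∈ Γ → x ∘ σ ∈ Γ)
    (hfperm : ∀ (σ : Equiv.Perm ι) (x : ι → ℝ), f (x ∘ σ) = f x) {μ x : ι → ℝ} (hμ : μ ∈ Γ)
    (hx : x ∈ convexHull ℝ (Set.range fun σ : Equiv.Perm ι => μ ∘ σ)) :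
    x ∈ Γ ∧ f μ ≤ f x := by
  have hperm : (Set.range fun σ : Equiv.Perm ι => μ ∘ σ) ⊆ Γ :=
    Set.range_subset_iff.2 fun σ => hΓperm σ μ hμ
  obtain ⟨_, ⟨σ, rfl⟩, hle⟩ := hf.exists_le_of_mem_convexHull hperm hx
  exact ⟨convexHull_min hperm hf.1 hx, hfperm σ μ ▸ hle⟩

variable [Fintype ι] [DecidableEq ι]

lemma mulVec_mem_convexHull_perm {D : Matrix ι ι ℝ} (hD : D ∈ doublyStochastic ℝ ι) (μ : ι → ℝ) :
    D *ᵥ μ ∈ convexHull ℝ (Set.range fun σ : Equiv.Perm ι => μ ∘ σ) := by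
  obtain ⟨w, hw0, hw1, rfl⟩ := exists_eq_sum_perm_of_mem_doublyStochastic hD
  simp_rw [sum_mulVec, smul_mulVec, permMatrix_mulVec]
  exact (convex_convexHull ℝ _).sum_mem (fun σ _ => hw0 σ) hw1
    fun σ _ => subset_convexHull ℝ _ ⟨σ, rfl⟩

variable {𝕜 : Type*} [RCLike 𝕜]

lemma OrthonormalBasis.sq_norm_inner_mem_doublyStochastic {E : Type*} [NormedAddCommGroup E]
    [InnerProductSpace 𝕜 E] (u v : OrthonormalBasis ι 𝕜 E) :
    of (fun i j => ‖⟪u j, v i⟫_𝕜‖ ^ 2) ∈ doublyStochastic ℝ ι :=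
  mem_doublyStochastic_iff_sum.2 ⟨fun _ _ => sq_nonneg _,
    fun i => by simp [u.sum_sq_norm_inner_right], fun j => by simp [v.sum_sq_norm_inner_left]⟩

namespace Matrix.IsHermitian

variable {M : Matrix ι ι 𝕜} (hM : M.IsHermitian)

lemma inner_eigenvectorBasis_mulVec (x : EuclideanSpace 𝕜 ι) (j : ι) :
    ⟪hM.eigenvectorBasis j, WithLp.toLp 2 (M *ᵥ x.ofLp)⟫_𝕜
      = hM.eigenvalues j * ⟪hM.eigenvectorBasis j, x⟫_𝕜 := by
  have hsymm := isSymmetric_toEuclideanLin_iff.mpr hM (hM.eigenvectorBasis j) x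
  simp only [toLpLin_apply, hM.mulVec_eigenvectorBasis] at hsymm
  rw [← hsymm]
  simp [inner_smul_left_eq_smul, RCLike.real_smul_eq_coe_mul]

lemma re_star_dotProduct_mulVec (x : EuclideanSpace 𝕜 ι) :
    RCLike.re (star x.ofLp ⬝ᵥ M *ᵥ x.ofLp)
      = ∑ j, ‖⟪hM.eigenvectorBasis j, x⟫_𝕜‖ ^ 2 * hM.eigenvalues j := by
  have hsum := hM.eigenvectorBasis.sum_inner_mul_inner x (WithLp.toLp 2 (M *ᵥ x.ofLp))
  rw [EuclideanSpace.inner_eq_star_dotProduct, dotProduct_comm] at hsum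
  rw [← hsum, map_sum]
  refine Finset.sum_congr rfl fun j _ => ?_
  rw [hM.inner_eigenvectorBasis_mulVec, ← inner_conj_symm x, mul_left_comm, RCLike.conj_mul,
    ← RCLike.ofReal_pow, ← RCLike.ofReal_mul, RCLike.ofReal_re, mul_comm]

lemma re_diag_mem_convexHull_perm (v : OrthonormalBasis ι 𝕜 (EuclideanSpace 𝕜 ι)) :
    (fun i => RCLike.re (star (v i).ofLp ⬝ᵥ M *ᵥ (v i).ofLp))
      ∈ convexHull ℝ (Set.range fun σ : Equiv.Perm ι => hM.eigenvalues ∘ σ) := by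
  convert mulVec_mem_convexHull_perm
    (hM.eigenvectorBasis.sq_norm_inner_mem_doublyStochastic v) hM.eigenvalues using 1
  funext i
  rw [hM.re_star_dotProduct_mulVec]
  simp [mulVec, dotProduct]

theorem le_apply_eigenvalues_of_eq_smul_add_smul {Γ : Set (ι → ℝ)} {f : (ι → ℝ) → ℝ}
    (hf : ConcaveOn ℝ Γ f) (hΓperm : ∀ (σ : Equiv.Perm ι) (x : ι → ℝ), x ∈ Γ → x ∘ σ ∈ Γ)
    (hfperm : ∀ (σ : Equiv.Perm ι) (x : ι → ℝ), f (x ∘ σ) = f x)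
    {N P : Matrix ι ι 𝕜} (hN : N.IsHermitian) (hP : P.IsHermitian) {a b : ℝ} (ha : 0 ≤ a)
    (hb : 0 ≤ b) (hab : a + b = 1) (hPMN : P = a • M + b • N) (hMΓ : hM.eigenvalues ∈ Γ)
    (hNΓ : hN.eigenvalues ∈ Γ) :
    a * f hM.eigenvalues + b * f hN.eigenvalues ≤ f hP.eigenvalues := by
  set v := hP.eigenvectorBasis
  obtain ⟨hxΓ, hfx⟩ :=
    hf.le_apply_of_mem_convexHull_perm hΓperm hfperm hMΓ (hM.re_diag_mem_convexHull_perm v)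
  obtain ⟨hyΓ, hfy⟩ :=
    hf.le_apply_of_mem_convexHull_perm hΓperm hfperm hNΓ (hN.re_diag_mem_convexHull_perm v)
  have hsplit : hP.eigenvalues = a • (fun i => RCLike.re (star (v i).ofLp ⬝ᵥ M *ᵥ (v i).ofLp))
      + b • (fun i => RCLike.re (star (v i).ofLp ⬝ᵥ N *ᵥ (v i).ofLp)) := by
    funext i
    rw [hP.eigenvalues_eq i]
    subst hPMN
    simp only [add_mulVec, smul_mulVec, dotProduct_add, dotProduct_smul, map_add, RCLike.smul_re,
      Pi.add_apply, Pi.smul_apply, smul_eq_mul, v]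
  calc a * f hM.eigenvalues + b * f hN.eigenvalues
      ≤ a * f _ + b * f _ := by gcongr
    _ ≤ f hP.eigenvalues := hsplit ▸ hf.2 hxΓ hyΓ ha hb hab

end Matrix.IsHermitian

lemma ConcaveOn.nonneg_of_hasDerivWithinAt_Ici {g : ℝ → ℝ} {a d : ℝ}
    (hg : ConcaveOn ℝ (Set.Ici a) g) (hbdd : BddBelow (g '' Set.Ici a))
    (hd : HasDerivWithinAt g d (Set.Ici a) a) : 0 ≤ d := by
  obtain ⟨m, hm⟩ := hbdd
  have hlim : Filter.Tendsto (fun T : ℝ => (m - g a) / T) Filter.atTop (nhds 0) :=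
    tendsto_const_nhds.div_atTop Filter.tendsto_id
  refine le_of_tendsto hlim ((Filter.eventually_gt_atTop 0).mono fun T hT => ?_)
  have hslope := hg.slope_le_of_hasDerivWithinAt Set.self_mem_Ici
    (Set.mem_Ici.2 (le_add_of_nonneg_right hT.le)) (lt_add_of_pos_right a hT) hd
  have hmT : m ≤ g (a + T) := hm ⟨a + T, Set.mem_Ici.2 (le_add_of_nonneg_right hT.le), rfl⟩
  rw [slope_def_field, add_sub_cancel_left] at hslope
  calc (m - g a) / T ≤ (g (a + T) - g a) / T := by gcongr
    _ ≤ d := hslope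

theorem deriv_eigenvalue_functional_nonneg_general
    {n : ℕ} (Γ : Set (Fin n → ℝ)) (f : (Fin n → ℝ) → ℝ)
    (hΓperm : ∀ (σ : Equiv.Perm (Fin n)) (x : Fin n → ℝ), x ∈ Γ → x ∘ σ ∈ Γ)
    (hfperm : ∀ (σ : Equiv.Perm (Fin n)) (x : Fin n → ℝ), f (x ∘ σ) = f x)
    (hconcave : ConcaveOn ℝ Γ f)
    (hnonneg : ∀ x ∈ Γ, 0 ≤ f x)
    (A B : Matrix (Fin n) (Fin n) ℂ)
    (hHerm : ∀ t : ℝ, (A + (t : ℂ) • B).IsHermitian)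
    (hadm : ∀ t : ℝ, 0 ≤ t → (hHerm t).eigenvalues ∈ Γ)
    (d : ℝ)
    (hderiv : HasDerivWithinAt (fun t : ℝ => f ((hHerm t).eigenvalues)) d
      (Set.Ici (0 : ℝ)) 0) :
    0 ≤ d := by
  have hconc : ConcaveOn ℝ (Set.Ici 0) fun t : ℝ => f (hHerm t).eigenvalues := by
    refine ⟨convex_Ici 0, fun s hs t ht a b ha hb hab => ?_⟩
    have hline : A + ((a • s + b • t : ℝ) : ℂ) • B
        = a • (A + (s : ℂ) • B) + b • (A + (t : ℂ) • B) := by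
      obtain rfl : b = 1 - a := by linarith
      ext i j
      simp only [Matrix.add_apply, Matrix.smul_apply, smul_eq_mul, Complex.real_smul]
      push_cast
      ring
    exact (hHerm s).le_apply_eigenvalues_of_eq_smul_add_smul hconcave hΓperm hfperm (hHerm t)
      (hHerm _) ha hb hab hline (hadm s hs) (hadm t ht)
  refine hconc.nonneg_of_hasDerivWithinAt_Ici ⟨0, ?_⟩ hderiv
  rintro _ ⟨t, ht, rfl⟩
  exact hnonneg _ (hadm t ht)

/-- Along the Hermitian line `A + tB`, if the admissibility condition holds for
all `t ≥ 0`, the one-sided derivative at `t = 0` of `t ↦ f(eigenvalues)` is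
nonnegative, for `f` symmetric, concave and nonnegative on a symmetric cone. -/
theorem deriv_eigenvalue_functional_nonneg
    {n : ℕ} (Γ : Set (Fin n → ℝ)) (f : (Fin n → ℝ) → ℝ)
    (hclosed : IsClosed Γ)
    (hconvex : Convex ℝ Γ)
    (hcone : ∀ t : ℝ, 0 < t → ∀ x ∈ Γ, t • x ∈ Γ)
    (hΓperm : ∀ (σ : Equiv.Perm (Fin n)) (x : Fin n → ℝ), x ∈ Γ → x ∘ σ ∈ Γ)
    (hfperm : ∀ (σ : Equiv.Perm (Fin n)) (x : Fin n → ℝ), f (x ∘ σ) = f x)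
    (hconcave : ConcaveOn ℝ Γ f)
    (hnonneg : ∀ x ∈ Γ, 0 ≤ f x)
    (A B : Matrix (Fin n) (Fin n) ℂ)
    (hA : A.IsHermitian) (hB : B.IsHermitian)
    (hHerm : ∀ t : ℝ, (A + (t : ℂ) • B).IsHermitian)
    (hadm : ∀ t : ℝ, 0 ≤ t → (hHerm t).eigenvalues ∈ Γ)
    (d : ℝ)
    (hderiv : HasDerivWithinAt (fun t : ℝ => f ((hHerm t).eigenvalues)) d
      (Set.Ici (0 : ℝ)) 0) :
    0 ≤ d :=
  deriv_eigenvalue_functional_nonneg_general Γ f hΓperm hfperm hconcave hnonneg A B hHerm hadm d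
    hderiv
end

section
/- Let B be an n × n Hermitian complex matrix and let μ₁ ≤ μ₂ ≤ ⋯ ≤ μₙ be its eigenvalues listed in nondecreasing order with multiplicity. Let c₁ ≥ c₂ ≥ ⋯ ≥ cₙ be real numbers. Then ∑ⱼ₌₁ⁿ cⱼ·Re(B_{jj}) ≥ ∑ⱼ₌₁ⁿ cⱼ·μⱼ, where B_{jj} denotes the j-th diagonal entry of B (which is real since B is Hermitian). -/
/-!
Diagonalize `B = U D Uᴴ` with `U` unitary. Then `B_jj = ∑ₖ |U_jk|² λₖ`, and `(|U_jk|²)` is doubly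
stochastic, so by Birkhoff's theorem the diagonal of `B` is a convex combination of permutations of
the eigenvalue vector. The linear functional `x ↦ ∑ cⱼ xⱼ` is bounded below on each permutation by
the rearrangement inequality, hence on their convex hull.
-/

open Matrix

section

variable {n : Type*} [Fintype n] [DecidableEq n]

namespace Matrix

theorem map_norm_sq_mem_doublyStochastic {𝕜 : Type*} [RCLike 𝕜] {U : Matrix n n 𝕜}
    (hU : U ∈ unitaryGroup n 𝕜) : U.map (‖·‖ ^ 2) ∈ doublyStochastic ℝ n := by
  refine mem_doublyStochastic_iff_sum.2 ⟨fun _ _ => sq_nonneg _, fun i => ?_, fun j => ?_⟩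
  · have h := congr_fun₂ (mem_unitaryGroup_iff.1 hU) i i
    simp only [mul_apply, star_apply, RCLike.star_def, RCLike.mul_conj, one_apply_eq] at h
    exact_mod_cast h
  · have h := congr_fun₂ (mem_unitaryGroup_iff'.1 hU) j j
    simp only [mul_apply, star_apply, RCLike.star_def, RCLike.conj_mul, one_apply_eq] at h
    exact_mod_cast h

theorem IsHermitian.apply_self_eq_mulVec_eigenvalues {𝕜 : Type*} [RCLike 𝕜] {A : Matrix n n 𝕜}
    (hA : A.IsHermitian) (i : n) :
    A i i = ((hA.eigenvectorUnitary : Matrix n n 𝕜).map (‖·‖ ^ 2) *ᵥ hA.eigenvalues) i := by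
  conv_lhs => rw [hA.spectral_theorem]
  simp only [Unitary.conjStarAlgAut_apply, mul_apply, diagonal_apply, star_apply, mul_ite,
    mul_zero, Finset.sum_ite_eq', Finset.mem_univ, if_true, Function.comp_apply, mulVec,
    dotProduct, map_apply, RCLike.star_def]
  push_cast
  refine Finset.sum_congr rfl fun k _ => ?_
  rw [← RCLike.mul_conj]
  ring

end Matrix

theorem Antivary.dotProduct_le_dotProduct_mulVec {R : Type*} [Field R] [LinearOrder R]
    [IsStrictOrderedRing R] {f g : n → R} (hfg : Antivary f g) {P : Matrix n n R}
    (hP : P ∈ doublyStochastic R n) : f ⬝ᵥ g ≤ f ⬝ᵥ (P *ᵥ g) := by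
  rw [← SetLike.mem_coe, doublyStochastic_eq_convexHull_permMatrix] at hP
  refine convexHull_min (t := {Q | f ⬝ᵥ g ≤ f ⬝ᵥ (Q *ᵥ g)}) ?_ (convex_halfSpace_ge ?_ _) hP
  · rintro _ ⟨σ, rfl⟩
    simpa [permMatrix_mulVec, dotProduct] using hfg.sum_mul_le_sum_mul_comp_perm
  · constructor
    · intro P Q; simp [add_mulVec]
    · intro a P; simp [smul_mulVec]

end

/-- Schur–Horn plus rearrangement: for a Hermitian matrix `B` with eigenvalues
`μ₁ ≤ ⋯ ≤ μₙ` and reals `c₁ ≥ ⋯ ≥ cₙ`, `∑ cⱼ·Re(B_{jj}) ≥ ∑ cⱼ·μⱼ`. -/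
theorem schur_horn_rearrangement
    {n : ℕ} (B : Matrix (Fin n) (Fin n) ℂ) (hB : B.IsHermitian)
    (μ : Fin n → ℝ) (hμmono : Monotone μ)
    (hμeig : ∃ σ : Equiv.Perm (Fin n), ∀ i, μ i = hB.eigenvalues (σ i))
    (c : Fin n → ℝ) (hc : Antitone c) :
    ∑ j, c j * μ j ≤ ∑ j, c j * (B j j).re := by
  obtain ⟨τ, hτ⟩ := hμeig
  set P := (hB.eigenvectorUnitary : Matrix (Fin n) (Fin n) ℂ).map (‖·‖ ^ 2) * τ⁻¹.permMatrix ℝ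
  have hP : P ∈ doublyStochastic ℝ (Fin n) :=
    mul_mem (map_norm_sq_mem_doublyStochastic hB.eigenvectorUnitary.2)
      permMatrix_mem_doublyStochastic
  have hdiag (j : Fin n) : (B j j).re = (P *ᵥ μ) j := by
    have hμτ : μ ∘ ⇑τ⁻¹ = hB.eigenvalues := funext fun k => by simp [hτ]
    rw [hB.apply_self_eq_mulVec_eigenvalues, ← mulVec_mulVec, permMatrix_mulVec, hμτ]
    rfl
  simpa only [dotProduct, hdiag] using (hc.antivary hμmono).dotProduct_le_dotProduct_mulVec hP
end

section
/- Let U, V ⊆ ℝ^d be open sets and let Φ : V → U be a smooth (infinitely differentiable) map. Let y₀ ∈ V and x₀ = Φ(y₀) ∈ U. If φ : U → ℝ is punctually second order differentiable at x₀, then φ ∘ Φ : V → ℝ is punctually second order differentiable at y₀. -/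
open Asymptotics

/-- `φ` is punctually second order differentiable at `x₀`. -/
def PunctSecondOrderDiffAt {d : ℕ} (φ : EuclideanSpace ℝ (Fin d) → ℝ)
    (x₀ : EuclideanSpace ℝ (Fin d)) : Prop :=
  ∃ (a : ℝ) (L : EuclideanSpace ℝ (Fin d) →L[ℝ] ℝ)
    (Q : EuclideanSpace ℝ (Fin d) →L[ℝ] EuclideanSpace ℝ (Fin d) →L[ℝ] ℝ),
    (fun x => φ x - (a + L (x - x₀) + Q (x - x₀) (x - x₀)))
      =o[nhds x₀] fun x => ‖x - x₀‖ ^ 2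

section Aux

open Filter Metric

variable {E F : Type*} [NormedAddCommGroup E] [NormedSpace ℝ E]
  [NormedAddCommGroup F] [NormedSpace ℝ F]

/-- Second-order Taylor expansion of a `C²` function on an open set. -/
lemma taylor2_aux {f : E → F} {s : Set E} (hs : IsOpen s) {x : E} (hx : x ∈ s)
    (hf : ContDiffOn ℝ 2 f s) :
    (fun y => f y - f x - fderiv ℝ f x (y - x)
        - (2⁻¹ : ℝ) • fderiv ℝ (fderiv ℝ f) x (y - x) (y - x))
      =o[nhds x] fun y => ‖y - x‖ ^ 2 := by
  set A := fderiv ℝ f x with hA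
  set B := fderiv ℝ (fderiv ℝ f) x with hB
  have hfx : ContDiffAt ℝ 2 f x := hf.contDiffAt (hs.mem_nhds hx)
  have hsymm : ∀ v w, B v w = B w v := fun v w => (hfx.isSymmSndFDerivAt (by simp)).eq v w
  have hdiff : ∀ z ∈ s, DifferentiableAt ℝ f z := fun z hz =>
    (hf.contDiffAt (hs.mem_nhds hz)).differentiableAt two_ne_zero
  have hB' : HasFDerivAt (fderiv ℝ f) B x :=
    ((hfx.fderiv_right (m := 1) (le_refl 2)).differentiableAt one_ne_zero).hasFDerivAt
  rw [isLittleO_iff]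
  intro ε εpos
  have hlo := hB'.isLittleO
  rw [isLittleO_iff] at hlo
  have hev : ∀ᶠ z in nhds x, z ∈ s ∧ ‖fderiv ℝ f z - A - B (z - x)‖ ≤ ε * ‖z - x‖ := by
    filter_upwards [hs.mem_nhds hx, hlo εpos] with z h1 h2
    exact ⟨h1, by simpa [hA] using h2⟩
  rcases Metric.mem_nhds_iff.1 hev with ⟨r, rpos, hr⟩
  have key : ∀ y ∈ ball x r,
      ‖f y - f x - A (y - x) - (2⁻¹ : ℝ) • B (y - x) (y - x)‖ ≤ ε * ‖y - x‖ ^ 2 := by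
    intro y hy
    set g : E → F := fun z => f z - A (z - x) - (2⁻¹ : ℝ) • B (z - x) (z - x) with hg
    have hball : closedBall x ‖y - x‖ ⊆ ball x r := by
      intro z hz
      rw [mem_closedBall, dist_eq_norm] at hz
      rw [mem_ball, dist_eq_norm]
      calc ‖z - x‖ ≤ ‖y - x‖ := hz
        _ < r := by rw [← dist_eq_norm]; exact mem_ball.1 hy
    have hgd : ∀ z ∈ closedBall x ‖y - x‖,
        HasFDerivAt g (fderiv ℝ f z - A - B (z - x)) z := by
      intro z hz
      have hzs : z ∈ s := (hr (hball hz)).1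
      have h1 : HasFDerivAt f (fderiv ℝ f z) z := (hdiff z hzs).hasFDerivAt
      have h2 : HasFDerivAt (fun z : E => A (z - x)) A z := by
        have h := (A.hasFDerivAt (x := z)).sub_const (A x)
        simp only [← map_sub] at h
        exact h
      have hp : HasFDerivAt (fun z : E => (z - x, z - x))
          ((ContinuousLinearMap.id ℝ E).prod (ContinuousLinearMap.id ℝ E)) z :=
        HasFDerivAt.prodMk ((hasFDerivAt_id z).sub_const x) ((hasFDerivAt_id z).sub_const x)
      have hbb := B.isBoundedBilinearMap
      have hq : HasFDerivAt (fun z : E => B (z - x) (z - x))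
          ((hbb.deriv (z - x, z - x)).comp
            ((ContinuousLinearMap.id ℝ E).prod (ContinuousLinearMap.id ℝ E))) z :=
        by have := (hbb.hasFDerivAt (z - x, z - x)).comp z hp; exact this
      have h3 : HasFDerivAt (fun z : E => (2⁻¹ : ℝ) • B (z - x) (z - x)) (B (z - x)) z := by
        refine (hq.const_smul (2⁻¹ : ℝ)).congr_fderiv ?_
        ext u
        simp [hsymm u (z - x)]
        module
      exact (h1.sub h2).sub h3
    have hbound : ∀ z ∈ closedBall x ‖y - x‖,
        ‖fderiv ℝ f z - A - B (z - x)‖ ≤ ε * ‖y - x‖ := by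
      intro z hz
      refine (hr (hball hz)).2.trans ?_
      have h4 : dist z x ≤ ‖y - x‖ := mem_closedBall.1 hz
      rw [dist_eq_norm] at h4
      nlinarith [norm_nonneg (z - x), εpos.le]
    have hconv : Convex ℝ (closedBall x ‖y - x‖) := convex_closedBall x _
    have hxmem : x ∈ closedBall x ‖y - x‖ := by simp [mem_closedBall, norm_nonneg]
    have hymem : y ∈ closedBall x ‖y - x‖ := by simp [mem_closedBall, dist_eq_norm]
    have := hconv.norm_image_sub_le_of_norm_hasFDerivWithin_le
      (fun z hz => (hgd z hz).hasFDerivWithinAt) hbound hxmem hymem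
    have hgx : g x = f x := by simp [hg]
    calc ‖f y - f x - A (y - x) - (2⁻¹ : ℝ) • B (y - x) (y - x)‖
        = ‖g y - g x‖ := by rw [hgx]; simp only [hg]; congr 1; abel
      _ ≤ ε * ‖y - x‖ * ‖y - x‖ := this
      _ = ε * ‖y - x‖ ^ 2 := by ring
  filter_upwards [ball_mem_nhds x rpos] with y hy
  simpa [abs_of_nonneg (sq_nonneg ‖y - x‖), norm_pow] using key y hy


lemma bilin_isBigO_aux {G : Type*} [NormedAddCommGroup G] [NormedSpace ℝ G]
    (Q : E →L[ℝ] F →L[ℝ] G) (f : α → E) (g : α → F) (l : Filter α) :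
    (fun y => Q (f y) (g y)) =O[l] fun y => ‖f y‖ * ‖g y‖ := by
  rw [isBigO_iff]
  refine ⟨‖Q‖, Eventually.of_forall fun y => ?_⟩
  have := Q.le_opNorm₂ (f y) (g y)
  calc ‖Q (f y) (g y)‖ ≤ ‖Q‖ * ‖f y‖ * ‖g y‖ := this
    _ = ‖Q‖ * ‖‖f y‖ * ‖g y‖‖ := by
        rw [Real.norm_of_nonneg (mul_nonneg (norm_nonneg _) (norm_nonneg _))]; ring



end Aux

open Filter Metric in
/-- Punctual second order differentiability is preserved under composition with
a smooth map. -/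
theorem punctSecondOrderDiffAt_comp_smooth
    {d : ℕ} (U V : Set (EuclideanSpace ℝ (Fin d)))
    (hU : IsOpen U) (hV : IsOpen V)
    (Φ : EuclideanSpace ℝ (Fin d) → EuclideanSpace ℝ (Fin d))
    (hΦ : ContDiffOn ℝ (⊤ : ℕ∞) Φ V) (hΦVU : Set.MapsTo Φ V U)
    (y₀ : EuclideanSpace ℝ (Fin d)) (hy₀ : y₀ ∈ V)
    (x₀ : EuclideanSpace ℝ (Fin d)) (hx₀Φ : x₀ = Φ y₀) (hx₀ : x₀ ∈ U)
    (φ : EuclideanSpace ℝ (Fin d) → ℝ)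
    (hφ : PunctSecondOrderDiffAt φ x₀) :
    PunctSecondOrderDiffAt (φ ∘ Φ) y₀ := by
  subst hx₀Φ
  obtain ⟨a, L, Q, hlo⟩ := hφ
  have hΦ2 : ContDiffOn ℝ 2 Φ V := hΦ.of_le (m := 2) (show ((2 : ℕ∞) : WithTop ℕ∞) ≤ _ from WithTop.coe_le_coe.2 le_top)
  set A := fderiv ℝ Φ y₀ with hA
  set B := fderiv ℝ (fderiv ℝ Φ) y₀ with hB
  set x₀ := Φ y₀ with hx₀'
  have hΦat : ContDiffAt ℝ 2 Φ y₀ := hΦ2.contDiffAt (hV.mem_nhds hy₀)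
  -- Taylor expansion of Φ
  have T : (fun y => Φ y - x₀ - A (y - y₀) - (2⁻¹ : ℝ) • B (y - y₀) (y - y₀))
      =o[nhds y₀] fun y => ‖y - y₀‖ ^ 2 := taylor2_aux hV hy₀ hΦ2
  -- first-order bigO bounds
  have hBO : (fun y => (2⁻¹ : ℝ) • B (y - y₀) (y - y₀)) =O[nhds y₀] fun y => ‖y - y₀‖ ^ 2 := by
    rw [isBigO_iff]
    refine ⟨‖B‖, Eventually.of_forall fun y => ?_⟩
    have h1 := B.le_opNorm₂ (y - y₀) (y - y₀)
    have h2 : ‖(2⁻¹ : ℝ) • B (y - y₀) (y - y₀)‖ = 2⁻¹ * ‖B (y - y₀) (y - y₀)‖ := by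
      rw [norm_smul]; norm_num
    rw [h2, Real.norm_of_nonneg (sq_nonneg _)]
    nlinarith [norm_nonneg (B (y - y₀) (y - y₀)), norm_nonneg B, norm_nonneg (y - y₀)]
  have E2 : (fun y => Φ y - x₀ - A (y - y₀)) =O[nhds y₀] fun y => ‖y - y₀‖ ^ 2 := by
    have := T.isBigO.add hBO
    refine this.congr_left fun y => ?_
    abel
  have hdA : HasFDerivAt Φ A y₀ := (hΦat.differentiableAt two_ne_zero).hasFDerivAt
  have E3 : (fun y => Φ y - x₀) =O[nhds y₀] fun y => ‖y - y₀‖ :=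
    hdA.isBigO_sub.norm_right
  -- cube is little-o of square
  have hcube : (fun y : EuclideanSpace ℝ (Fin d) => ‖y - y₀‖ ^ 3) =o[nhds y₀] fun y => ‖y - y₀‖ ^ 2 := by
    have h1 : (fun x : ℝ => x ^ 3) =o[nhds 0] fun x => x ^ 2 :=
      isLittleO_pow_pow (by norm_num)
    have h2 : Tendsto (fun y : EuclideanSpace ℝ (Fin d) => ‖y - y₀‖) (nhds y₀) (nhds 0) := by
      have : Continuous fun y : EuclideanSpace ℝ (Fin d) => ‖y - y₀‖ := (continuous_id.sub continuous_const).norm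
      simpa using this.tendsto' y₀ 0 (by simp)
    exact h1.comp_tendsto h2
  -- composition of the main little-o
  have hcont : Tendsto Φ (nhds y₀) (nhds x₀) := (hΦat.continuousAt).tendsto
  have E4 : (fun y => φ (Φ y) - (a + L (Φ y - x₀) + Q (Φ y - x₀) (Φ y - x₀)))
      =o[nhds y₀] fun y => ‖y - y₀‖ ^ 2 := by
    exact (hlo.comp_tendsto hcont).trans_isBigO ((E3.norm_left).pow 2)
  -- linear part
  have E5 : (fun y => L (Φ y - x₀ - A (y - y₀) - (2⁻¹ : ℝ) • B (y - y₀) (y - y₀)))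
      =o[nhds y₀] fun y => ‖y - y₀‖ ^ 2 :=
    (L.isBigO_comp _ _).trans_isLittleO T
  -- quadratic parts
  have hAO : (fun y => A (y - y₀)) =O[nhds y₀] fun y => ‖y - y₀‖ :=
    (A.isBigO_comp (fun y : EuclideanSpace ℝ (Fin d) => y - y₀) (nhds y₀)).norm_right
  have hcube3 : (fun y : EuclideanSpace ℝ (Fin d) => ‖y - y₀‖ * ‖y - y₀‖ ^ 2)
      =o[nhds y₀] fun y => ‖y - y₀‖ ^ 2 :=
    hcube.congr_left fun y => by ring
  have hcube3' : (fun y : EuclideanSpace ℝ (Fin d) => ‖y - y₀‖ ^ 2 * ‖y - y₀‖)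
      =o[nhds y₀] fun y => ‖y - y₀‖ ^ 2 :=
    hcube.congr_left fun y => by ring
  have T3a : (fun y => Q (Φ y - x₀) (Φ y - x₀ - A (y - y₀)))
      =o[nhds y₀] fun y => ‖y - y₀‖ ^ 2 :=
    ((bilin_isBigO_aux Q _ _ _).trans (E3.norm_left.mul E2.norm_left)).trans_isLittleO hcube3
  have T3b : (fun y => Q (Φ y - x₀ - A (y - y₀)) (A (y - y₀)))
      =o[nhds y₀] fun y => ‖y - y₀‖ ^ 2 :=
    ((bilin_isBigO_aux Q _ _ _).trans (E2.norm_left.mul hAO.norm_left)).trans_isLittleO hcube3'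
  -- assemble
  refine ⟨a, L.comp A, Q.bilinearComp A A
    + (2⁻¹ : ℝ) • ((ContinuousLinearMap.compL ℝ (EuclideanSpace ℝ (Fin d))
        (EuclideanSpace ℝ (Fin d)) ℝ L).comp B), ?_⟩
  have total := ((E4.add E5).add (T3a.add T3b))
  refine total.congr_left fun y => ?_
  simp only [Function.comp_apply, ContinuousLinearMap.add_apply,
    ContinuousLinearMap.smul_apply, ContinuousLinearMap.comp_apply,
    ContinuousLinearMap.bilinearComp_apply, ContinuousLinearMap.compL_apply,
    map_sub, map_smul, ContinuousLinearMap.sub_apply, smul_eq_mul]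
  ring
end

section
/- Let φ : ℝ^d → ℝ be bounded and uniformly continuous, with modulus of continuity ρ (a nondecreasing function with |φ(x) − φ(y)| ≤ ρ(|x − y|) for all x, y), let ε > 0, and set C = (2·sup_{ℝ^d}|φ|)^{1/2}. If z ∈ ℝ^d and ξ₀ ∈ ℝ^d attains the supremum in the sup-convolution, i.e. φ(z + ξ₀) + ε − |ξ₀|²/ε = sup_{ξ ∈ ℝ^d}(φ(z + ξ) + ε − |ξ|²/ε), then |ξ₀| ≤ ε^{1/2}·(ρ(C·ε^{1/2}))^{1/2}. Likewise, if ξ̃₀ attains the infimum in the inf-convolution φ_ε(z) = inf_{ξ ∈ ℝ^d}(φ(z + ξ) − ε + |ξ|²/ε), then |ξ̃₀| ≤ ε^{1/2}·(ρ(C·ε^{1/2}))^{1/2}. -/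
/-- Any maximizer `ξ₀` in the sup-convolution (resp. minimizer in the
inf-convolution) satisfies `‖ξ₀‖ ≤ √ε·(ρ(C·√ε))^{1/2}` with
`C = (2·sup|φ|)^{1/2}`. -/
theorem sup_inf_convolution_maximizer_small
    {d : ℕ} (φ : EuclideanSpace ℝ (Fin d) → ℝ)
    (hbdd : BddAbove (Set.range fun x => |φ x|))
    (ρ : ℝ → ℝ) (hρ : Monotone ρ)
    (hmod : ∀ x y, |φ x - φ y| ≤ ρ ‖x - y‖)
    (ε : ℝ) (hε : 0 < ε) (z : EuclideanSpace ℝ (Fin d)) :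
    (∀ ξ₀ : EuclideanSpace ℝ (Fin d),
      (∀ ξ : EuclideanSpace ℝ (Fin d),
        φ (z + ξ) + ε - ‖ξ‖ ^ 2 / ε ≤ φ (z + ξ₀) + ε - ‖ξ₀‖ ^ 2 / ε) →
      ‖ξ₀‖ ≤ Real.sqrt ε *
        Real.sqrt (ρ (Real.sqrt (2 * ⨆ x, |φ x|) * Real.sqrt ε))) ∧
    (∀ ξ₀ : EuclideanSpace ℝ (Fin d),
      (∀ ξ : EuclideanSpace ℝ (Fin d),
        φ (z + ξ₀) - ε + ‖ξ₀‖ ^ 2 / ε ≤ φ (z + ξ) - ε + ‖ξ‖ ^ 2 / ε) →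
      ‖ξ₀‖ ≤ Real.sqrt ε *
        Real.sqrt (ρ (Real.sqrt (2 * ⨆ x, |φ x|) * Real.sqrt ε))) := by
  set M : ℝ := ⨆ x, |φ x| with hMdef
  have hle : ∀ x, |φ x| ≤ M := fun x => le_ciSup hbdd x
  have hM0 : 0 ≤ M := (abs_nonneg _).trans (hle z)
  have key : ∀ ξ₀ : EuclideanSpace ℝ (Fin d),
      ‖ξ₀‖ ^ 2 / ε ≤ ρ ‖ξ₀‖ → ‖ξ₀‖ ^ 2 / ε ≤ 2 * M →
      ‖ξ₀‖ ≤ Real.sqrt ε * Real.sqrt (ρ (Real.sqrt (2 * M) * Real.sqrt ε)) := by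
    intro ξ₀ h1 h2
    have hsq : ‖ξ₀‖ ^ 2 ≤ 2 * M * ε := by
      have := (div_le_iff₀ hε).mp h2; linarith
    have hb : ‖ξ₀‖ ≤ Real.sqrt (2 * M) * Real.sqrt ε := by
      rw [← Real.sqrt_mul (by linarith) ε]
      calc ‖ξ₀‖ = Real.sqrt (‖ξ₀‖ ^ 2) := (Real.sqrt_sq (norm_nonneg _)).symm
        _ ≤ _ := Real.sqrt_le_sqrt hsq
    have h3 : ‖ξ₀‖ ^ 2 ≤ ε * ρ (Real.sqrt (2 * M) * Real.sqrt ε) := by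
      have h4 := hρ hb
      have h5 := (div_le_iff₀ hε).mp (h1.trans h4)
      linarith
    calc ‖ξ₀‖ = Real.sqrt (‖ξ₀‖ ^ 2) := (Real.sqrt_sq (norm_nonneg _)).symm
      _ ≤ Real.sqrt (ε * ρ (Real.sqrt (2 * M) * Real.sqrt ε)) := Real.sqrt_le_sqrt h3
      _ = _ := Real.sqrt_mul hε.le _
  constructor
  · intro ξ₀ hmax
    have h0 := hmax 0
    simp only [add_zero, norm_zero] at h0
    have hd : ‖ξ₀‖ ^ 2 / ε ≤ φ (z + ξ₀) - φ z := by
      have : (0:ℝ) ^ 2 / ε = 0 := by simp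
      rw [this] at h0; linarith
    refine key ξ₀ (hd.trans ?_) (hd.trans ?_)
    · have := hmod (z + ξ₀) z
      have he : z + ξ₀ - z = ξ₀ := by abel
      rw [he] at this
      exact (le_abs_self _).trans this
    · have h1 := hle (z + ξ₀)
      have h2 := hle z
      have := abs_sub_abs_le_abs_sub (φ (z + ξ₀)) (φ z)
      calc φ (z + ξ₀) - φ z ≤ |φ (z + ξ₀) - φ z| := le_abs_self _
        _ ≤ |φ (z + ξ₀)| + |φ z| := abs_sub _ _
        _ ≤ 2 * M := by linarith
  · intro ξ₀ hmin
    have h0 := hmin 0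
    simp only [add_zero, norm_zero] at h0
    have hd : ‖ξ₀‖ ^ 2 / ε ≤ φ z - φ (z + ξ₀) := by
      have : (0:ℝ) ^ 2 / ε = 0 := by simp
      rw [this] at h0; linarith
    refine key ξ₀ (hd.trans ?_) (hd.trans ?_)
    · have := hmod z (z + ξ₀)
      have he : z - (z + ξ₀) = -ξ₀ := by abel
      rw [he, norm_neg] at this
      exact (le_abs_self _).trans this
    · have h1 := hle (z + ξ₀)
      have h2 := hle z
      calc φ z - φ (z + ξ₀) ≤ |φ z - φ (z + ξ₀)| := le_abs_self _
        _ ≤ |φ z| + |φ (z + ξ₀)| := abs_sub _ _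
        _ ≤ 2 * M := by linarith
end
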